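/- Fix an integer q ≥ 1 and set p = 2q − 1. For an integer K ≥ 1 and λ > 0, define Q_{2p}(z) = Σ_{l∈ℤ} sinc(π(z+l))^{2p+2}, Q_{2p−2q}(z) = Σ_{l∈ℤ} sinc(π(z+l))^{2p−2q+2}, φ(u, x) = Q_{2p}(u/K)^{−1/2} Σ_{l∈ℤ} sinc(π(u/K + l))^{p+1} exp(−2πi·x·(u + lK)), μ(u) = (2πu)^{2q} sinc(πu/K)^{2q} Q_{2p−2q}(u/K)/Q_{2p}(u/K), W(x, t) = ∫_0^K φ(u, x)·conj(φ(u, t))/(1 + λμ(u)) du, the bandwidth h by h^{−1} = ∫_0^K (1 + λ(πu)^{2q})^{−1} du, the scaled kernel 𝒦(x, t) = h·W(hx, ht), the parameter k = λ^{1/(2q)}·π·K, and the constant c₁ = 1/(K·h). Define the regression spline equivalent kernel on ℝ by K_rs(x, t) = ∫_0^1 φ₁(u, x)·conj(φ₁(u, t)) du, where φ₁(u, x) = Q_{2p}(u)^{−1/2} Σ_{l∈ℤ} sinc(π(u + l))^{p+1} exp(−2πi·x·(u + l)). Then there exists a constant C = C(q) < ∞, independent of K, λ, x, t, such that whenever 0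 < k < 1, |c₁·𝒦(c₁x, c₁t) − K_rs(x, t)| ≤ C·k^{2q} for all x, t ∈ ℝ. -/

import Mathlib

open Real MeasureTheory ComplexConjugate

/-- `sinc x = sin x / x` for `x ≠ 0`, and `sinc 0 = 1`. -/
noncomputable def sinc (x : ℝ) : ℝ := if x = 0 then 1 else Real.sin x / x

/-- `Q_n(z) = Σ_{l ∈ ℤ} sinc(π(z+l))^n` (here `n` is the power, so `Q_{2p}` of the
paper is `Qs (2*p+2)` and `Q_{2p-2q}` is `Qs (2*p-2*q+2)`). -/
noncomputable def Qs (n : ℕ) (z : ℝ) : ℝ := ∑' l : ℤ, _root_.sinc (Real.pi * (z + l)) ^ n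

/-- `φ(u,x) = Q_{2p}(u/K)^{−1/2} Σ_{l ∈ ℤ} sinc(π(u/K + l))^{p+1} exp(−2πi x (u + lK))`. -/
noncomputable def phic (K p : ℕ) (u x : ℝ) : ℂ :=
  (((Real.sqrt (Qs (2 * p + 2) (u / K)))⁻¹ : ℝ) : ℂ) *
    ∑' l : ℤ, ((_root_.sinc (Real.pi * (u / K + l)) ^ (p + 1) : ℝ) : ℂ) *
      Complex.exp (-2 * (Real.pi : ℂ) * Complex.I * (x : ℂ) * ((u : ℂ) + (l : ℂ) * (K : ℂ)))

/-- `μ(u) = (2πu)^{2q} sinc(πu/K)^{2q} Q_{2p−2q}(u/K)/Q_{2p}(u/K)`. -/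
noncomputable def muc (K p q : ℕ) (u : ℝ) : ℝ :=
  (2 * Real.pi * u) ^ (2 * q) * _root_.sinc (Real.pi * u / K) ^ (2 * q) *
    Qs (2 * p - 2 * q + 2) (u / K) / Qs (2 * p + 2) (u / K)

/-- The asymptotic equivalent kernel on ℝ:
`W(x,t) = ∫_0^K φ(u,x) conj(φ(u,t)) / (1 + λμ(u)) du`. -/
noncomputable def Wker (K p q : ℕ) (lam : ℝ) (x t : ℝ) : ℂ :=
  ∫ u in (0:ℝ)..(K : ℝ),
    phic K p u x * conj (phic K p u t) / (((1 + lam * muc K p q u : ℝ)) : ℂ)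

/-- The regression spline equivalent kernel on ℝ:
`K_rs(x,t) = ∫_0^1 φ₁(u,x) conj(φ₁(u,t)) du` where `φ₁` is `φ` with unit knot spacing. -/
noncomputable def Krs (p : ℕ) (x t : ℝ) : ℂ :=
  ∫ u in (0:ℝ)..1, phic 1 p u x * conj (phic 1 p u t)

/-!
Substituting `u = K v` turns `c₁ 𝒦(c₁x, c₁t) = K⁻¹ W(x/K, t/K)` into
`∫₀¹ φ₁(v,x) conj φ₁(v,t) / (1 + λ K^{2q} μ₁(v)) dv`, where `φ₁, μ₁` are the unit-knot-spacing
versions of `φ, μ`, while `K_rs` is the same integral without the denominator. Since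
`0 ≤ 1 - 1/(1+m) ≤ m`, the difference is at most `λ K^{2q} sup|φ₁|² sup μ₁ = (k/π)^{2q} · const`.
Both suprema are finite: `sinc(π(v+l))² ≤ 6/(1+l²)` for `0 ≤ v ≤ 1` makes every lattice sum
converge uniformly, and Jordan's inequality bounds the term of `Q_{2p}(v)` nearest the origin
from below by `(2/π)^{2p+2}`.
-/

open Set

lemma sinc_eq_real_sinc : _root_.sinc = Real.sinc := rfl

lemma mul_sinc_eq_sin (x : ℝ) : x * Real.sinc x = Real.sin x := by
  rcases eq_or_ne x 0 with rfl | hx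
  · simp
  · rw [Real.sinc_of_ne_zero hx, mul_div_cancel₀ _ hx]

lemma sq_sinc_mul_one_add_sq_le (y : ℝ) : Real.sinc y ^ 2 * (1 + y ^ 2) ≤ 2 := by
  have h1 : Real.sinc y ^ 2 ≤ 1 := (sq_le_one_iff_abs_le_one _).mpr (Real.abs_sinc_le_one y)
  have h2 : (y * Real.sinc y) ^ 2 ≤ 1 := by rw [mul_sinc_eq_sin]; exact Real.sin_sq_le_one y
  nlinarith

lemma two_div_pi_le_sinc_pi_mul {w : ℝ} (hw : |w| ≤ 1 / 2) : 2 / π ≤ Real.sinc (π * w) := by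
  wlog hw0 : 0 ≤ w generalizing w
  · simpa using this (w := -w) (by rwa [abs_neg]) (by linarith)
  rcases hw0.eq_or_lt with rfl | hw0
  · rw [mul_zero, Real.sinc_zero, div_le_one pi_pos]
    exact two_le_pi
  · have hpw : 0 < π * w := by positivity
    rw [Real.sinc_of_ne_zero hpw.ne', le_div_iff₀ hpw]
    refine mul_le_sin hpw.le ?_
    rw [abs_of_pos hw0] at hw
    nlinarith [pi_pos]

noncomputable def sincMajorant (l : ℤ) : ℝ := 6 / (1 + (l : ℝ) ^ 2)

lemma summable_sincMajorant : Summable sincMajorant := by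
  refine ((summable_one_div_int_pow.mpr one_lt_two).mul_left 6).of_norm_bounded_eventually ?_
  filter_upwards [(finite_singleton (0 : ℤ)).compl_mem_cofinite] with l hl
  have hl : (l : ℝ) ≠ 0 := Int.cast_ne_zero.mpr hl
  rw [Real.norm_of_nonneg (by unfold sincMajorant; positivity), sincMajorant, mul_one_div]
  gcongr
  linarith

lemma tsum_sincMajorant_nonneg : 0 ≤ ∑' l, sincMajorant l :=
  tsum_nonneg fun l ↦ by unfold sincMajorant; positivity

lemma sq_sinc_pi_add_int_le {v : ℝ} (hv : v ∈ Icc (0 : ℝ) 1) (l : ℤ) :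
    Real.sinc (π * (v + l)) ^ 2 ≤ sincMajorant l := by
  have hsinc := sq_sinc_mul_one_add_sq_le (π * (v + l))
  have hpi : (v + l) ^ 2 ≤ (π * (v + l)) ^ 2 := by
    rw [mul_pow]
    exact le_mul_of_one_le_left (sq_nonneg _) (one_le_pow₀ (by linarith [pi_gt_three]))
  have hl : 1 + (l : ℝ) ^ 2 ≤ 3 * (1 + (v + l) ^ 2) := by
    nlinarith [hv.1, hv.2, sq_nonneg (2 * v + l)]
  rw [sincMajorant, le_div_iff₀ (by positivity)]
  nlinarith [sq_nonneg (Real.sinc (π * (v + l)))]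

lemma abs_sinc_pi_add_int_pow_le {n : ℕ} (hn : 2 ≤ n) {v : ℝ} (hv : v ∈ Icc (0 : ℝ) 1)
    (l : ℤ) : |Real.sinc (π * (v + l))| ^ n ≤ sincMajorant l :=
  calc |Real.sinc (π * (v + l))| ^ n
      ≤ |Real.sinc (π * (v + l))| ^ 2 :=
        pow_le_pow_of_le_one (abs_nonneg _) (Real.abs_sinc_le_one _) hn
    _ = Real.sinc (π * (v + l)) ^ 2 := sq_abs _
    _ ≤ sincMajorant l := sq_sinc_pi_add_int_le hv l

lemma summable_abs_sinc_pi_add_int_pow {n : ℕ} (hn : 2 ≤ n) {v : ℝ} (hv : v ∈ Icc (0 : ℝ) 1) :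
    Summable fun l : ℤ ↦ |Real.sinc (π * (v + l))| ^ n :=
  summable_sincMajorant.of_nonneg_of_le (fun _ ↦ by positivity) (abs_sinc_pi_add_int_pow_le hn hv)

lemma Qs_eq_tsum_abs {n : ℕ} (he : Even n) (v : ℝ) :
    Qs n v = ∑' l : ℤ, |Real.sinc (π * (v + l))| ^ n :=
  tsum_congr fun _ ↦ (he.pow_abs _).symm

lemma Qs_nonneg {n : ℕ} (he : Even n) (v : ℝ) : 0 ≤ Qs n v :=
  tsum_nonneg fun _ ↦ he.pow_nonneg _

lemma Qs_le_tsum_sincMajorant {n : ℕ} (hn : 2 ≤ n) (he : Even n) {v : ℝ}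
    (hv : v ∈ Icc (0 : ℝ) 1) : Qs n v ≤ ∑' l, sincMajorant l := by
  rw [Qs_eq_tsum_abs he]
  exact (summable_abs_sinc_pi_add_int_pow hn hv).tsum_le_tsum (abs_sinc_pi_add_int_pow_le hn hv)
    summable_sincMajorant

lemma pow_le_Qs {n : ℕ} (hn : 2 ≤ n) (he : Even n) {v : ℝ} (hv : v ∈ Icc (0 : ℝ) 1) :
    (2 / π) ^ n ≤ Qs n v := by
  obtain ⟨l, hl⟩ : ∃ l : ℤ, |v + l| ≤ 1 / 2 := by
    rcases le_or_gt v (1 / 2) with h | h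
    · exact ⟨0, by rw [Int.cast_zero, add_zero, abs_le]; constructor <;> linarith [hv.1]⟩
    · exact ⟨-1, by rw [Int.cast_neg, Int.cast_one, abs_le]; constructor <;> linarith [hv.2]⟩
  rw [Qs_eq_tsum_abs he]
  calc (2 / π) ^ n ≤ |Real.sinc (π * (v + l))| ^ n :=
        pow_le_pow_left₀ (by positivity) ((two_div_pi_le_sinc_pi_mul hl).trans (le_abs_self _)) n
    _ ≤ _ := (summable_abs_sinc_pi_add_int_pow hn hv).le_tsum l fun _ _ ↦ by positivity

lemma Qs_pos {n : ℕ} (hn : 2 ≤ n) (he : Even n) {v : ℝ} (hv : v ∈ Icc (0 : ℝ) 1) :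
    0 < Qs n v :=
  (pow_pos (by positivity) n).trans_le (pow_le_Qs hn he hv)

lemma continuousOn_Qs {n : ℕ} (hn : 2 ≤ n) : ContinuousOn (Qs n) (Icc 0 1) :=
  show ContinuousOn (fun v ↦ ∑' l : ℤ, Real.sinc (π * (v + l)) ^ n) _ from
    continuousOn_tsum (fun _ ↦ Continuous.continuousOn (by fun_prop)) summable_sincMajorant
      fun l v hv ↦ by rw [norm_pow, Real.norm_eq_abs]; exact abs_sinc_pi_add_int_pow_le hn hv l

lemma phic_mul_div {K : ℕ} (hK : K ≠ 0) (p : ℕ) (v x : ℝ) :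
    phic K p (K * v) (x / K) = phic 1 p v x := by
  have hK' : (K : ℝ) ≠ 0 := Nat.cast_ne_zero.mpr hK
  simp only [phic, Nat.cast_one, div_one, mul_div_cancel_left₀ _ hK']
  congr 1
  refine tsum_congr fun l ↦ ?_
  congr 2
  push_cast
  field_simp

lemma phic_one (p : ℕ) (v x : ℝ) :
    phic 1 p v x = (((√(Qs (2 * p + 2) v))⁻¹ : ℝ) : ℂ) *
      ∑' l : ℤ, ((Real.sinc (π * (v + l)) ^ (p + 1) : ℝ) : ℂ) *
        Complex.exp (-2 * π * Complex.I * x * ((v + l : ℝ) : ℂ)) := by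
  simp only [phic, Nat.cast_one, div_one, mul_one, Complex.ofReal_add, Complex.ofReal_intCast]
  rfl

lemma norm_phic_one_summand (p : ℕ) (v x : ℝ) (l : ℤ) :
    ‖((Real.sinc (π * (v + l)) ^ (p + 1) : ℝ) : ℂ) *
        Complex.exp (-2 * π * Complex.I * x * ((v + l : ℝ) : ℂ))‖ =
      |Real.sinc (π * (v + l))| ^ (p + 1) := by
  have hphase : -2 * π * Complex.I * x * ((v + l : ℝ) : ℂ) =
      ((-2 * π * x * (v + l) : ℝ) : ℂ) * Complex.I := by
    push_cast; ring
  rw [norm_mul, hphase, Complex.norm_exp_ofReal_mul_I, mul_one, Complex.norm_real,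
    Real.norm_eq_abs, abs_pow]

lemma norm_phic_one_le {p : ℕ} (hp : 1 ≤ p) {v : ℝ} (hv : v ∈ Icc (0 : ℝ) 1) (x : ℝ) :
    ‖phic 1 p v x‖ ≤ (∑' l, sincMajorant l) / (2 / π) ^ (p + 1) := by
  have hsqrt : (2 / π) ^ (p + 1) ≤ √(Qs (2 * p + 2) v) := by
    rw [Real.le_sqrt (by positivity) (Qs_nonneg ⟨p + 1, by ring⟩ v), ← pow_mul]
    exact pow_le_Qs (by omega) ⟨p + 1, by ring⟩ hv |>.trans_eq' (by ring_nf)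
  have hsum : ‖∑' l : ℤ, ((Real.sinc (π * (v + l)) ^ (p + 1) : ℝ) : ℂ) *
      Complex.exp (-2 * π * Complex.I * x * ((v + l : ℝ) : ℂ))‖ ≤ ∑' l, sincMajorant l := by
    have hsummable := summable_abs_sinc_pi_add_int_pow (v := v) (n := p + 1) (by omega) hv
    simp_rw [← norm_phic_one_summand p v x] at hsummable
    refine (norm_tsum_le_tsum_norm hsummable).trans ?_
    simp_rw [norm_phic_one_summand]
    exact (summable_abs_sinc_pi_add_int_pow (by omega) hv).tsum_le_tsum
      (abs_sinc_pi_add_int_pow_le (by omega) hv) summable_sincMajorant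
  rw [phic_one, norm_mul, Complex.norm_real, Real.norm_of_nonneg (by positivity), div_eq_inv_mul]
  exact mul_le_mul (inv_anti₀ (by positivity) hsqrt) hsum (norm_nonneg _) (by positivity)

lemma continuousOn_phic_one {p : ℕ} (hp : 1 ≤ p) (x : ℝ) :
    ContinuousOn (fun v ↦ phic 1 p v x) (Icc 0 1) := by
  simp_rw [phic_one]
  refine ContinuousOn.mul ?_ ?_
  · refine Complex.continuous_ofReal.comp_continuousOn ((continuousOn_Qs (by omega)).sqrt.inv₀ ?_)
    exact fun v hv ↦ (Real.sqrt_pos.mpr (Qs_pos (by omega) ⟨p + 1, by ring⟩ hv)).ne'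
  · refine continuousOn_tsum (fun _ ↦ Continuous.continuousOn (by fun_prop)) summable_sincMajorant
      fun l v hv ↦ ?_
    rw [norm_phic_one_summand]
    exact abs_sinc_pi_add_int_pow_le (by omega) hv l

lemma even_two_mul_sub_add_two (p q : ℕ) : Even (2 * p - 2 * q + 2) := ⟨p - q + 1, by omega⟩

lemma muc_one (p q : ℕ) (v : ℝ) :
    muc 1 p q v =
      (2 * Real.sin (π * v)) ^ (2 * q) * Qs (2 * p - 2 * q + 2) v / Qs (2 * p + 2) v := by
  rw [muc, Nat.cast_one, div_one, div_one, sinc_eq_real_sinc, ← mul_pow, mul_assoc 2 π v,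
    mul_assoc, mul_sinc_eq_sin]

lemma muc_mul {K : ℕ} (hK : K ≠ 0) (p q : ℕ) (v : ℝ) :
    muc K p q (K * v) = K ^ (2 * q) * muc 1 p q v := by
  have hK' : (K : ℝ) ≠ 0 := Nat.cast_ne_zero.mpr hK
  have hpi : π * (K * v) / K = π * v := by field_simp
  rw [muc_one, muc, mul_div_cancel_left₀ _ hK', hpi, sinc_eq_real_sinc, ← mul_sinc_eq_sin]
  ring

lemma muc_nonneg (K p q : ℕ) (u : ℝ) : 0 ≤ muc K p q u := by
  have he : Even (2 * q) := even_two_mul q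
  exact div_nonneg
    (mul_nonneg (mul_nonneg (he.pow_nonneg _) (he.pow_nonneg _))
      (Qs_nonneg (even_two_mul_sub_add_two p q) _))
    (Qs_nonneg (n := 2 * p + 2) ⟨p + 1, by ring⟩ _)

lemma muc_one_le (p q : ℕ) {v : ℝ} (hv : v ∈ Icc (0 : ℝ) 1) :
    muc 1 p q v ≤ 4 ^ q * (∑' l, sincMajorant l) / (2 / π) ^ (2 * p + 2) := by
  have hsin : (2 * Real.sin (π * v)) ^ (2 * q) ≤ 4 ^ q := by
    rw [pow_mul]
    exact pow_le_pow_left₀ (sq_nonneg _) (by nlinarith [Real.sin_sq_le_one (π * v)]) q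
  have hS := tsum_sincMajorant_nonneg
  rw [muc_one]
  exact div_le_div₀ (by positivity)
    (mul_le_mul hsin (Qs_le_tsum_sincMajorant (by omega) (even_two_mul_sub_add_two p q) hv)
      (Qs_nonneg (even_two_mul_sub_add_two p q) v) (by positivity))
    (by positivity) (pow_le_Qs (by omega) ⟨p + 1, by ring⟩ hv)

lemma continuousOn_muc_one (p q : ℕ) : ContinuousOn (muc 1 p q) (Icc 0 1) := by
  rw [show muc 1 p q = _ from funext (muc_one p q)]
  exact ((Continuous.continuousOn (by fun_prop)).mul (continuousOn_Qs (by omega))).div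
    (continuousOn_Qs (by omega)) fun v hv ↦ (Qs_pos (by omega) ⟨p + 1, by ring⟩ hv).ne'

lemma inv_mul_Wker_div {K : ℕ} (hK : K ≠ 0) (p q : ℕ) (lam x t : ℝ) :
    (K : ℂ)⁻¹ * Wker K p q lam (x / K) (t / K) =
      ∫ v in (0 : ℝ)..1, phic 1 p v x * conj (phic 1 p v t) /
        ((1 + lam * K ^ (2 * q) * muc 1 p q v : ℝ) : ℂ) := by
  have hcov := intervalIntegral.smul_integral_comp_mul_left (a := 0) (b := 1)
    (fun u ↦ phic K p u (x / K) * conj (phic K p u (t / K)) / ((1 + lam * muc K p q u : ℝ) : ℂ))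
    (K : ℝ)
  simp only [mul_zero, mul_one, phic_mul_div hK, muc_mul hK, ← mul_assoc] at hcov
  rw [Wker, ← hcov, Complex.real_smul, ← mul_assoc, Complex.ofReal_natCast,
    inv_mul_cancel₀ (Nat.cast_ne_zero.mpr hK), one_mul]

lemma norm_div_one_add_sub_le (z : ℂ) {m : ℝ} (hm : 0 ≤ m) :
    ‖z / ((1 + m : ℝ) : ℂ) - z‖ ≤ ‖z‖ * m := by
  have h1m : (1 + (m : ℂ)) ≠ 0 := by norm_cast; positivity
  have hz : z / ((1 + m : ℝ) : ℂ) - z = -(z * ((m / (1 + m) : ℝ) : ℂ)) := by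
    push_cast
    field_simp
    ring
  rw [hz, norm_neg, norm_mul, Complex.norm_real, Real.norm_of_nonneg (by positivity)]
  exact mul_le_mul_of_nonneg_left (div_le_self hm (by linarith)) (norm_nonneg z)

lemma norm_integral_div_one_add_sub_le {g : ℝ → ℂ} {m : ℝ → ℝ} {a b B M : ℝ} (hab : a ≤ b)
    (hg : ContinuousOn g (Icc a b)) (hm : ContinuousOn m (Icc a b))
    (hm0 : ∀ v ∈ Icc a b, 0 ≤ m v) (hgB : ∀ v ∈ Icc a b, ‖g v‖ ≤ B)
    (hmM : ∀ v ∈ Icc a b, m v ≤ M) :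
    ‖(∫ v in a..b, g v / ((1 + m v : ℝ) : ℂ)) - ∫ v in a..b, g v‖ ≤ B * M * (b - a) := by
  have hden : ContinuousOn (fun v ↦ ((1 + m v : ℝ) : ℂ)) (Icc a b) :=
    Complex.continuous_ofReal.comp_continuousOn (continuousOn_const.add hm)
  have hint : IntervalIntegrable (fun v ↦ g v / ((1 + m v : ℝ) : ℂ)) volume a b := by
    refine ContinuousOn.intervalIntegrable ?_
    rw [uIcc_of_le hab]
    exact hg.div hden fun v hv ↦ by have := hm0 v hv; norm_cast; positivity
  have hint' : IntervalIntegrable g volume a b :=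
    ContinuousOn.intervalIntegrable (by rwa [uIcc_of_le hab])
  rw [← intervalIntegral.integral_sub hint hint', ← abs_of_nonneg (sub_nonneg.mpr hab)]
  refine intervalIntegral.norm_integral_le_of_norm_le_const fun v hv ↦ ?_
  rw [uIoc_of_le hab] at hv
  have hv : v ∈ Icc a b := Ioc_subset_Icc_self hv
  calc ‖g v / ((1 + m v : ℝ) : ℂ) - g v‖ ≤ ‖g v‖ * m v := norm_div_one_add_sub_le _ (hm0 v hv)
    _ ≤ B * M := mul_le_mul (hgB v hv) (hmM v hv) (hm0 v hv) ((norm_nonneg _).trans (hgB v hv))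

lemma exists_norm_inv_mul_Wker_sub_Krs_le {p : ℕ} (hp : 1 ≤ p) (q : ℕ) :
    ∃ C, ∀ K : ℕ, K ≠ 0 → ∀ lam : ℝ, 0 ≤ lam → ∀ x t : ℝ,
      ‖(K : ℂ)⁻¹ * Wker K p q lam (x / K) (t / K) - Krs p x t‖ ≤ C * (lam * K ^ (2 * q)) := by
  have hS := tsum_sincMajorant_nonneg
  set B := (∑' l, sincMajorant l) / (2 / π) ^ (p + 1)
  set M := 4 ^ q * (∑' l, sincMajorant l) / (2 / π) ^ (2 * p + 2)
  refine ⟨B * B * M, fun K hK lam hlam x t ↦ ?_⟩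
  have hbound := norm_integral_div_one_add_sub_le
    (g := fun v ↦ phic 1 p v x * conj (phic 1 p v t))
    (m := fun v ↦ lam * K ^ (2 * q) * muc 1 p q v) (B := B * B) (M := lam * K ^ (2 * q) * M)
    zero_le_one
    ((continuousOn_phic_one hp x).mul
      (Complex.continuous_conj.comp_continuousOn (continuousOn_phic_one hp t)))
    (continuousOn_const.mul (continuousOn_muc_one p q))
    (fun v _ ↦ mul_nonneg (by positivity) (muc_nonneg 1 p q v))
    (fun v hv ↦ by
      rw [norm_mul, RCLike.norm_conj]
      exact mul_le_mul (norm_phic_one_le hp hv x) (norm_phic_one_le hp hv t) (norm_nonneg _)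
        (by positivity))
    (fun v hv ↦ mul_le_mul_of_nonneg_left (muc_one_le p q hv) (by positivity))
  rw [inv_mul_Wker_div hK, Krs]
  refine hbound.trans_eq ?_
  ring

theorem stmt14 (q : ℕ) (hq : 1 ≤ q) :
    ∃ C : ℝ, ∀ (K : ℕ), 1 ≤ K → ∀ lam : ℝ, 0 < lam → ∀ h : ℝ, 0 < h →
      h⁻¹ = (∫ u in (0:ℝ)..(K : ℝ), (1 + lam * (Real.pi * u) ^ (2 * q))⁻¹) →
      ∀ k : ℝ, k = lam ^ ((1 : ℝ) / (2 * q)) * Real.pi * K →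
      ∀ c₁ : ℝ, c₁ = 1 / (K * h) →
      0 < k → k < 1 →
      ∀ x t : ℝ,
        ‖(c₁ : ℂ) * ((h : ℂ) * Wker K (2 * q - 1) q lam (h * (c₁ * x)) (h * (c₁ * t))) -
            Krs (2 * q - 1) x t‖ ≤ C * k ^ (2 * q) := by
  obtain ⟨C, hC⟩ := exists_norm_inv_mul_Wker_sub_Krs_le (p := 2 * q - 1) (by omega) q
  refine ⟨C / π ^ (2 * q), fun K hK lam hlam h hh _ k hk c₁ hc₁ _ _ x t ↦ ?_⟩
  have hK0 : K ≠ 0 := by omega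
  have hc₁h : c₁ * h = (K : ℝ)⁻¹ := by rw [hc₁]; field_simp
  have harg (y : ℝ) : h * (c₁ * y) = y / K := by
    rw [← mul_assoc, mul_comm h, hc₁h, inv_mul_eq_div]
  have hroot : (lam ^ ((1 : ℝ) / (2 * q))) ^ (2 * q) = lam := by
    rw [one_div, show (2 * q : ℝ) = ((2 * q : ℕ) : ℝ) by push_cast; ring]
    exact Real.rpow_inv_natCast_pow hlam.le (by omega)
  have hk2q : k ^ (2 * q) = π ^ (2 * q) * (lam * K ^ (2 * q)) := by
    rw [hk, mul_pow, mul_pow, hroot]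
    ring
  rw [harg, harg, ← mul_assoc, ← Complex.ofReal_mul, hc₁h, Complex.ofReal_inv,
    Complex.ofReal_natCast, hk2q]
  refine (hC K hK0 lam hlam.le x t).trans_eq ?_
  field_simp
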